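/- Let T ≥ 1, let X_1,…,X_T and Y_1,…,Y_T be finite nonempty types, let two (general) scenario trees be given by conditional probabilities p_t and q_t, and let d : X×Y → ℝ≥0 be a cost on path pairs. Then the dynamic-programming value at the roots equals the nested distance LP value: D_0(root, root) = ND, where ND is the minimum of the flat linear program over transport plans on path pairs subject to the successor-form conditional marginal constraints. -/

import Mathlib

open scoped NNReal Classical
open Finset

noncomputable section

/-- A full path of a `T`-stage scenario tree with stage types `X 0, …, X (T-1)`
(0-indexed: index `t` corresponds to stage `t+1` of the paper). -/
abbrev NDPath (X : ℕ → Type) (T : ℕ) := ∀ t : Fin T, X t.1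

/-- A stage-`t` prefix (the history of the first `t` stages); `t = 0` is the root. -/
abbrev NDPre (X : ℕ → Type) (t : ℕ) := ∀ τ : Fin t, X τ.1

/-- The path `i` extends the stage-`t` prefix `k`. -/
def NDExtends {X : ℕ → Type} {T t : ℕ} (i : NDPath X T) (k : NDPre X t) : Prop :=
  ∀ (τ : Fin t) (h : τ.1 < T), i ⟨τ.1, h⟩ = k τ

/-- The subtree weight `π_{k,l}` of a transport plan `π` on path pairs:
the total mass of `π` on path pairs extending the prefix pair `(k, l)`. -/
def NDsubw {X Y : ℕ → Type} {T : ℕ} [∀ n, Fintype (X n)] [∀ n, Fintype (Y n)]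
    (π : NDPath X T → NDPath Y T → ℝ≥0) (t : ℕ) (k : NDPre X t) (l : NDPre Y t) : ℝ≥0 :=
  ∑ i : NDPath X T, ∑ j : NDPath Y T,
    if NDExtends i k ∧ NDExtends j l then π i j else 0

/-- The nested distance LP value: minimum of `∑ π(i,j) d(i,j)` over transport plans of
total mass one satisfying the successor-form conditional marginal constraints. -/
def NDval {X Y : ℕ → Type} (T : ℕ) [∀ n, Fintype (X n)] [∀ n, Fintype (Y n)]
    (p : ∀ t, NDPre X t → X t → ℝ≥0) (q : ∀ t, NDPre Y t → Y t → ℝ≥0)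
    (d : NDPath X T → NDPath Y T → ℝ≥0) : ℝ≥0 :=
  sInf { v | ∃ π : NDPath X T → NDPath Y T → ℝ≥0,
    (∑ i, ∑ j, π i j) = 1 ∧
    (∀ t, t < T → ∀ (k : NDPre X t) (l : NDPre Y t) (x : X t) (y : Y t),
      (∑ y' : Y t, NDsubw π (t+1) (Fin.snoc k x) (Fin.snoc l y'))
          = p t k x * NDsubw π t k l ∧
      (∑ x' : X t, NDsubw π (t+1) (Fin.snoc k x') (Fin.snoc l y))
          = q t l y * NDsubw π t k l) ∧
    v = ∑ i, ∑ j, π i j * d i j }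

/-- The sub-tree distance `D_t(k,l)`, defined by backward recursion: at `t = T` it is the
path cost, and for `t < T` it is the optimal value of the stage-`t` transport subproblem. -/
def NDsub {X Y : ℕ → Type} (T : ℕ) [∀ n, Fintype (X n)] [∀ n, Fintype (Y n)]
    (p : ∀ t, NDPre X t → X t → ℝ≥0) (q : ∀ t, NDPre Y t → Y t → ℝ≥0)
    (d : NDPath X T → NDPath Y T → ℝ≥0)
    (t : ℕ) (k : NDPre X t) (l : NDPre Y t) : ℝ≥0 :=
  if h : t < T then
    sInf { v | ∃ π : X t → Y t → ℝ≥0,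
      (∀ x, ∑ y, π x y = p t k x) ∧ (∀ y, ∑ x, π x y = q t l y) ∧
      v = ∑ x, ∑ y, π x y * NDsub T p q d (t+1) (Fin.snoc k x) (Fin.snoc l y) }
  else
    d (fun τ => k ⟨τ.1, lt_of_lt_of_le τ.2 (not_lt.mp h)⟩)
      (fun τ => l ⟨τ.1, lt_of_lt_of_le τ.2 (not_lt.mp h)⟩)
  termination_by T - t
  decreasing_by omega

/-- The dynamic-programming value function `Φ_t(k,l,m)` with mass argument `m`. -/
def NDPhi {X Y : ℕ → Type} (T : ℕ) [∀ n, Fintype (X n)] [∀ n, Fintype (Y n)]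
    (p : ∀ t, NDPre X t → X t → ℝ≥0) (q : ∀ t, NDPre Y t → Y t → ℝ≥0)
    (d : NDPath X T → NDPath Y T → ℝ≥0)
    (t : ℕ) (k : NDPre X t) (l : NDPre Y t) (m : ℝ≥0) : ℝ≥0 :=
  if h : t < T then
    sInf { v | ∃ π : X t → Y t → ℝ≥0,
      (∀ x, ∑ y, π x y = p t k x * m) ∧ (∀ y, ∑ x, π x y = q t l y * m) ∧
      v = ∑ x, ∑ y, NDPhi T p q d (t+1) (Fin.snoc k x) (Fin.snoc l y) (π x y) }
  else
    m * d (fun τ => k ⟨τ.1, lt_of_lt_of_le τ.2 (not_lt.mp h)⟩)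
          (fun τ => l ⟨τ.1, lt_of_lt_of_le τ.2 (not_lt.mp h)⟩)
  termination_by T - t
  decreasing_by omega

/-- The Wasserstein (optimal transport) value between two probability vectors for a cost `c`. -/
def dW {A B : Type*} [Fintype A] [Fintype B]
    (P : A → ℝ≥0) (Q : B → ℝ≥0) (c : A → B → ℝ≥0) : ℝ≥0 :=
  sInf { v | ∃ π : A → B → ℝ≥0,
    (∀ a, ∑ b, π a b = P a) ∧ (∀ b, ∑ a, π a b = Q b) ∧
    v = ∑ a, ∑ b, π a b * c a b }

/-- The conditional probability `P(i ∣ k)` of the path `i` given its stage-`t` prefix: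
the product of the conditional probabilities of the steps of `i` after stage `t`.
With `t = 0` this is the (unconditional) path probability `P(i)`. -/
def NDcondP {X : ℕ → Type} {T : ℕ} (p : ∀ t, NDPre X t → X t → ℝ≥0)
    (t : ℕ) (i : NDPath X T) : ℝ≥0 :=
  ∏ τ ∈ Finset.Ico t T,
    if h : τ < T then p τ (fun s => i ⟨s.1, lt_trans s.2 h⟩) (i ⟨τ, h⟩) else 1

end

/-!
For a feasible plan `π` and a node pair `(k, l)` of positive subtree weight, the normalized
weights `π_{k·x,l·y} / π_{k,l}` of the children couple `p_{t+1}(k, ·)` and `q_{t+1}(l, ·)`.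
Backward induction then gives `π_{k,l} · D_t(k,l) ≤ ∑_{(i,j) below (k,l)} π(i,j) d(i,j)`, which
at the root says `D_0 ≤` the cost of `π`.
Conversely, choosing an `ε`-optimal coupling at every node pair and multiplying these couplings
along paths yields a feasible plan whose subtree weights are the partial products, and whose
cost is at most `D_0 + T ε`.
-/

section Extends

variable {X : ℕ → Type} {T : ℕ}

theorem ndExtends_zero (i : NDPath X T) (k : NDPre X 0) : NDExtends i k :=
  fun τ _ => τ.elim0

theorem ndExtends_iff_eq {i : NDPath X T} {k : NDPre X T} : NDExtends i k ↔ i = k :=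
  ⟨fun h => funext fun τ => h τ τ.2, by rintro rfl τ _; rfl⟩

theorem ndExtends_snoc_iff {t : ℕ} (ht : t < T) {i : NDPath X T} {k : NDPre X t} {x : X t} :
    NDExtends i (Fin.snoc k x) ↔ NDExtends i k ∧ i ⟨t, ht⟩ = x := by
  constructor
  · intro h
    refine ⟨fun τ hτ => ?_, ?_⟩
    · simpa using h τ.castSucc hτ
    · simpa using h (Fin.last t) ht
  · rintro ⟨hk, rfl⟩ τ hτ
    rcases Fin.eq_castSucc_or_eq_last τ with ⟨τ, rfl⟩ | rfl
    · simpa using hk τ hτ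
    · simp

end Extends

section Coupling

variable {A B : Type*} [Fintype A] [Fintype B]

def IsCoupling (P : A → ℝ≥0) (Q : B → ℝ≥0) (σ : A → B → ℝ≥0) : Prop :=
  (∀ a, ∑ b, σ a b = P a) ∧ ∀ b, ∑ a, σ a b = Q b

theorem IsCoupling.sum_sum {P : A → ℝ≥0} {Q : B → ℝ≥0} {σ : A → B → ℝ≥0}
    (hσ : IsCoupling P Q σ) : ∑ a, ∑ b, σ a b = ∑ a, P a :=
  sum_congr rfl fun a _ => hσ.1 a

theorem isCoupling_mul {P : A → ℝ≥0} {Q : B → ℝ≥0} (hP : ∑ a, P a = 1) (hQ : ∑ b, Q b = 1) :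
    IsCoupling P Q fun a b => P a * Q b :=
  ⟨fun a => by rw [← mul_sum, hQ, mul_one], fun b => by rw [← sum_mul, hP, one_mul]⟩

end Coupling

section NestedDistance

variable {X Y : ℕ → Type} {T : ℕ}

def gluedPlan (σ : ∀ t, NDPre X t → NDPre Y t → X t → Y t → ℝ≥0) :
    ∀ t, NDPre X t → NDPre Y t → ℝ≥0
  | 0, _, _ => 1
  | t + 1, k, l => gluedPlan σ t (Fin.init k) (Fin.init l) *
      σ t (Fin.init k) (Fin.init l) (k (Fin.last t)) (l (Fin.last t))

theorem gluedPlan_snoc (σ : ∀ t, NDPre X t → NDPre Y t → X t → Y t → ℝ≥0) {t : ℕ}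
    (k : NDPre X t) (l : NDPre Y t) (x : X t) (y : Y t) :
    gluedPlan σ (t + 1) (Fin.snoc k x) (Fin.snoc l y) = gluedPlan σ t k l * σ t k l x y := by
  simp [gluedPlan]

variable [∀ n, Fintype (X n)] [∀ n, Fintype (Y n)]

theorem ndsubw_zero (f : NDPath X T → NDPath Y T → ℝ≥0) (k : NDPre X 0) (l : NDPre Y 0) :
    NDsubw f 0 k l = ∑ i, ∑ j, f i j := by
  simp [NDsubw, ndExtends_zero]

theorem ndsubw_top (f : NDPath X T → NDPath Y T → ℝ≥0) (k : NDPre X T) (l : NDPre Y T) :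
    NDsubw f T k l = f k l := by
  simp [NDsubw, ndExtends_iff_eq, ite_and]

theorem ndsubw_eq_sum_snoc {t : ℕ} (ht : t < T) (f : NDPath X T → NDPath Y T → ℝ≥0)
    (k : NDPre X t) (l : NDPre Y t) :
    NDsubw f t k l = ∑ x : X t, ∑ y : Y t, NDsubw f (t + 1) (Fin.snoc k x) (Fin.snoc l y) := by
  have split : ∀ i j, (if NDExtends i k ∧ NDExtends j l then f i j else 0) =
      ∑ x, ∑ y, if NDExtends i (Fin.snoc k x) ∧ NDExtends j (Fin.snoc l y) then f i j else 0 := by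
    intro i j
    simp only [ndExtends_snoc_iff ht]
    by_cases hi : NDExtends i k <;> by_cases hj : NDExtends j l <;> simp [hi, hj, ite_and]
  simp only [NDsubw, split]
  simp only [← Fintype.sum_prod_type']
  exact Fintype.sum_equiv ((Equiv.prodAssoc _ _ _).symm.trans
    ((Equiv.prodComm _ _).trans (Equiv.prodAssoc _ _ _))) _ _ fun _ => rfl

theorem exists_ndExtends_of_ndsubw_ne_zero {π : NDPath X T → NDPath Y T → ℝ≥0} {t : ℕ}
    {k : NDPre X t} {l : NDPre Y t} (h : NDsubw π t k l ≠ 0) :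
    ∃ (i : NDPath X T) (j : NDPath Y T), NDExtends i k ∧ NDExtends j l := by
  contrapose! h
  exact sum_eq_zero fun i _ => sum_eq_zero fun j _ => if_neg fun hij => h i j hij.1 hij.2

variable {p : ∀ t, NDPre X t → X t → ℝ≥0} {q : ∀ t, NDPre Y t → Y t → ℝ≥0}
  {d : NDPath X T → NDPath Y T → ℝ≥0}

theorem ndsub_top (k : NDPre X T) (l : NDPre Y T) : NDsub T p q d T k l = d k l := by
  rw [NDsub, dif_neg (lt_irrefl T)]

theorem ndsub_le_of_isCoupling {t : ℕ} (ht : t < T) {k : NDPre X t} {l : NDPre Y t}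
    {σ : X t → Y t → ℝ≥0} (hσ : IsCoupling (p t k) (q t l) σ) :
    NDsub T p q d t k l ≤
      ∑ x, ∑ y, σ x y * NDsub T p q d (t + 1) (Fin.snoc k x) (Fin.snoc l y) := by
  rw [NDsub, dif_pos ht]
  exact csInf_le (OrderBot.bddBelow _) ⟨σ, hσ.1, hσ.2, rfl⟩

theorem exists_isCoupling_le_ndsub_add {t : ℕ} (ht : t < T) {k : NDPre X t} {l : NDPre Y t}
    (hp : ∑ x, p t k x = 1) (hq : ∑ y, q t l y = 1) {ε : ℝ≥0} (hε : 0 < ε) :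
    ∃ σ : X t → Y t → ℝ≥0, IsCoupling (p t k) (q t l) σ ∧
      ∑ x, ∑ y, σ x y * NDsub T p q d (t + 1) (Fin.snoc k x) (Fin.snoc l y) ≤
        NDsub T p q d t k l + ε := by
  rw [NDsub, dif_pos ht]
  have hne : Set.Nonempty {v | ∃ σ : X t → Y t → ℝ≥0, (∀ x, ∑ y, σ x y = p t k x) ∧
      (∀ y, ∑ x, σ x y = q t l y) ∧
      v = ∑ x, ∑ y, σ x y * NDsub T p q d (t + 1) (Fin.snoc k x) (Fin.snoc l y)} :=
    ⟨_, _, (isCoupling_mul hp hq).1, (isCoupling_mul hp hq).2, rfl⟩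
  obtain ⟨_, ⟨σ, hσp, hσq, rfl⟩, hlt⟩ := exists_lt_of_csInf_lt hne (lt_add_of_pos_right _ hε)
  exact ⟨σ, ⟨hσp, hσq⟩, hlt.le⟩

def IsNestedPlan (p : ∀ t, NDPre X t → X t → ℝ≥0) (q : ∀ t, NDPre Y t → Y t → ℝ≥0)
    (π : NDPath X T → NDPath Y T → ℝ≥0) : Prop :=
  ∀ t, t < T → ∀ (k : NDPre X t) (l : NDPre Y t) (x : X t) (y : Y t),
    ∑ y' : Y t, NDsubw π (t + 1) (Fin.snoc k x) (Fin.snoc l y') = p t k x * NDsubw π t k l ∧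
    ∑ x' : X t, NDsubw π (t + 1) (Fin.snoc k x') (Fin.snoc l y) = q t l y * NDsubw π t k l

theorem IsNestedPlan.isCoupling_div {π : NDPath X T → NDPath Y T → ℝ≥0} (hπ : IsNestedPlan p q π)
    {t : ℕ} (ht : t < T) {k : NDPre X t} {l : NDPre Y t} (hw : NDsubw π t k l ≠ 0) :
    IsCoupling (p t k) (q t l)
      fun x y => NDsubw π (t + 1) (Fin.snoc k x) (Fin.snoc l y) / NDsubw π t k l := by
  obtain ⟨i, j, -⟩ := exists_ndExtends_of_ndsubw_ne_zero hw
  refine ⟨fun x => ?_, fun y => ?_⟩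
  · rw [← sum_div, (hπ t ht k l x (j ⟨t, ht⟩)).1, mul_div_cancel_right₀ _ hw]
  · rw [← sum_div, (hπ t ht k l (i ⟨t, ht⟩) y).2, mul_div_cancel_right₀ _ hw]

theorem IsNestedPlan.ndsubw_mul_ndsub_le {π : NDPath X T → NDPath Y T → ℝ≥0}
    (hπ : IsNestedPlan p q π) {t : ℕ} (ht : t ≤ T) (k : NDPre X t) (l : NDPre Y t) :
    NDsubw π t k l * NDsub T p q d t k l ≤ NDsubw (fun i j => π i j * d i j) t k l := by
  induction ht using Nat.decreasingInduction with
  | self => rw [ndsubw_top, ndsubw_top, ndsub_top]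
  | of_succ t ht ih =>
    set w := NDsubw π t k l
    rcases eq_or_ne w 0 with hw | hw
    · simp [hw]
    calc w * NDsub T p q d t k l
        ≤ w * ∑ x, ∑ y, NDsubw π (t + 1) (Fin.snoc k x) (Fin.snoc l y) / w *
            NDsub T p q d (t + 1) (Fin.snoc k x) (Fin.snoc l y) :=
          mul_le_mul_right (ndsub_le_of_isCoupling ht (hπ.isCoupling_div ht hw)) _
      _ = ∑ x, ∑ y, NDsubw π (t + 1) (Fin.snoc k x) (Fin.snoc l y) *
            NDsub T p q d (t + 1) (Fin.snoc k x) (Fin.snoc l y) := by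
          simp only [mul_sum, ← mul_assoc, mul_div_cancel₀ _ hw]
      _ ≤ ∑ x, ∑ y, NDsubw (fun i j => π i j * d i j) (t + 1) (Fin.snoc k x) (Fin.snoc l y) :=
          sum_le_sum fun x _ => sum_le_sum fun y _ => ih _ _
      _ = NDsubw (fun i j => π i j * d i j) t k l := (ndsubw_eq_sum_snoc ht _ k l).symm

section Glue

variable {σ : ∀ t, NDPre X t → NDPre Y t → X t → Y t → ℝ≥0}

theorem ndsubw_gluedPlan (hσ : ∀ t < T, ∀ k l, ∑ x, ∑ y, σ t k l x y = 1) {t : ℕ} (ht : t ≤ T)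
    (k : NDPre X t) (l : NDPre Y t) : NDsubw (gluedPlan σ T) t k l = gluedPlan σ t k l := by
  induction ht using Nat.decreasingInduction with
  | self => exact ndsubw_top _ k l
  | of_succ t ht ih =>
    simp only [ndsubw_eq_sum_snoc ht, ih, gluedPlan_snoc, ← mul_sum, hσ t ht k l, mul_one]

theorem sum_gluedPlan (hσ : ∀ t < T, ∀ k l, ∑ x, ∑ y, σ t k l x y = 1) :
    ∑ i, ∑ j, gluedPlan σ T i j = 1 := by
  rw [← ndsubw_zero _ (fun τ => τ.elim0) (fun τ => τ.elim0), ndsubw_gluedPlan hσ (Nat.zero_le T)]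
  rfl

theorem isNestedPlan_gluedPlan (hp : ∀ t < T, ∀ k, ∑ x, p t k x = 1)
    (hσ : ∀ t < T, ∀ k l, IsCoupling (p t k) (q t l) (σ t k l)) :
    IsNestedPlan p q (gluedPlan σ T) := by
  have hmass : ∀ t < T, ∀ k l, ∑ x, ∑ y, σ t k l x y = 1 := fun t ht k l => by
    rw [(hσ t ht k l).sum_sum, hp t ht k]
  intro t ht k l x y
  simp only [ndsubw_gluedPlan hmass ht.le, ndsubw_gluedPlan hmass ht, gluedPlan_snoc, ← mul_sum,
    (hσ t ht k l).1, (hσ t ht k l).2]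
  exact ⟨mul_comm _ _, mul_comm _ _⟩

theorem ndsubw_gluedPlan_cost_le (hσ : ∀ t < T, ∀ k l, ∑ x, ∑ y, σ t k l x y = 1) {ε : ℝ≥0}
    (hopt : ∀ t < T, ∀ k l, ∑ x, ∑ y, σ t k l x y *
      NDsub T p q d (t + 1) (Fin.snoc k x) (Fin.snoc l y) ≤ NDsub T p q d t k l + ε)
    {t : ℕ} (ht : t ≤ T) (k : NDPre X t) (l : NDPre Y t) :
    NDsubw (fun i j => gluedPlan σ T i j * d i j) t k l ≤
      gluedPlan σ t k l * (NDsub T p q d t k l + (T - t : ℕ) * ε) := by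
  induction ht using Nat.decreasingInduction with
  | self => simp [ndsubw_top, ndsub_top]
  | of_succ t ht ih =>
    set g := gluedPlan σ t k l
    have hsteps : ((T - (t + 1) : ℕ) : ℝ≥0) + 1 = (T - t : ℕ) := by norm_cast; omega
    calc NDsubw (fun i j => gluedPlan σ T i j * d i j) t k l
        ≤ ∑ x, ∑ y, g * σ t k l x y *
            (NDsub T p q d (t + 1) (Fin.snoc k x) (Fin.snoc l y) + (T - (t + 1) : ℕ) * ε) := by
          rw [ndsubw_eq_sum_snoc ht]
          gcongr with x _ y _
          simpa only [gluedPlan_snoc] using ih (Fin.snoc k x) (Fin.snoc l y)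
      _ = g * (∑ x, ∑ y, σ t k l x y * NDsub T p q d (t + 1) (Fin.snoc k x) (Fin.snoc l y) +
            (∑ x, ∑ y, σ t k l x y) * (T - (t + 1) : ℕ) * ε) := by
          simp only [mul_sum, sum_mul, ← sum_add_distrib]
          exact sum_congr rfl fun x _ => sum_congr rfl fun y _ => by ring
      _ ≤ g * (NDsub T p q d t k l + ε + 1 * (T - (t + 1) : ℕ) * ε) := by
          rw [hσ t ht k l]
          gcongr
          exact hopt t ht k l
      _ = g * (NDsub T p q d t k l + (T - t : ℕ) * ε) := by
          rw [← hsteps]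
          ring

end Glue

theorem exists_isNestedPlan_cost_le (hp : ∀ t < T, ∀ k, ∑ x, p t k x = 1)
    (hq : ∀ t < T, ∀ l, ∑ y, q t l y = 1) (k : NDPre X 0) (l : NDPre Y 0) {ε : ℝ≥0} (hε : 0 < ε) :
    ∃ π : NDPath X T → NDPath Y T → ℝ≥0, ∑ i, ∑ j, π i j = 1 ∧ IsNestedPlan p q π ∧
      ∑ i, ∑ j, π i j * d i j ≤ NDsub T p q d 0 k l + ε := by
  have hδ : 0 < ε / (T + 1) := div_pos hε (by positivity)
  have hstep : ∀ t k l, ∃ σ : X t → Y t → ℝ≥0, t < T → IsCoupling (p t k) (q t l) σ ∧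
      ∑ x, ∑ y, σ x y * NDsub T p q d (t + 1) (Fin.snoc k x) (Fin.snoc l y) ≤
        NDsub T p q d t k l + ε / (T + 1) := by
    intro t k l
    by_cases ht : t < T
    · obtain ⟨σ, hσ⟩ := exists_isCoupling_le_ndsub_add ht (hp t ht k) (hq t ht l) hδ
      exact ⟨σ, fun _ => hσ⟩
    · exact ⟨0, fun h => absurd h ht⟩
  choose σ hσ using hstep
  have hmass : ∀ t < T, ∀ k l, ∑ x, ∑ y, σ t k l x y = 1 := fun t ht k l => by
    rw [(hσ t k l ht).1.sum_sum, hp t ht k]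
  refine ⟨gluedPlan σ T, sum_gluedPlan hmass,
    isNestedPlan_gluedPlan hp fun t ht k l => (hσ t k l ht).1, ?_⟩
  calc ∑ i, ∑ j, gluedPlan σ T i j * d i j
      = NDsubw (fun i j => gluedPlan σ T i j * d i j) 0 k l := (ndsubw_zero _ k l).symm
    _ ≤ gluedPlan σ 0 k l * (NDsub T p q d 0 k l + (T - 0 : ℕ) * (ε / (T + 1))) :=
      ndsubw_gluedPlan_cost_le hmass (fun t ht k l => (hσ t k l ht).2) (Nat.zero_le T) k l
    _ ≤ NDsub T p q d 0 k l + ε := by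
      rw [gluedPlan, one_mul, Nat.sub_zero]
      gcongr
      calc (T : ℝ≥0) * (ε / (T + 1)) ≤ (T + 1) * (ε / (T + 1)) := by gcongr; exact le_self_add
        _ = ε := mul_div_cancel₀ _ (by positivity)

end NestedDistance

theorem subtreeDistance_root_eq_NDval_general
    (T : ℕ) (X Y : ℕ → Type)
    [∀ n, Fintype (X n)]
    [∀ n, Fintype (Y n)]
    (p : ∀ t, NDPre X t → X t → ℝ≥0) (q : ∀ t, NDPre Y t → Y t → ℝ≥0)
    (hp : ∀ t, t < T → ∀ k, ∑ x, p t k x = 1)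
    (hq : ∀ t, t < T → ∀ l, ∑ y, q t l y = 1)
    (d : NDPath X T → NDPath Y T → ℝ≥0) :
    NDsub T p q d 0 (fun τ => (Nat.not_lt_zero _ τ.2).elim) (fun τ => (Nat.not_lt_zero _ τ.2).elim)
      = NDval T p q d := by
  refine le_antisymm ?_ (le_of_forall_pos_le_add fun ε hε => ?_)
  · obtain ⟨π₀, hmass₀, hπ₀, -⟩ :=
      exists_isNestedPlan_cost_le (d := d) hp hq (fun τ => τ.elim0) (fun τ => τ.elim0) one_pos
    refine le_csInf ⟨_, π₀, hmass₀, hπ₀, rfl⟩ ?_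
    rintro _ ⟨π, hmass, hπ, rfl⟩
    simpa [ndsubw_zero, hmass] using
      IsNestedPlan.ndsubw_mul_ndsub_le (d := d) hπ (Nat.zero_le T) _ _
  · obtain ⟨π, hmass, hπ, hcost⟩ := exists_isNestedPlan_cost_le hp hq _ _ hε
    exact le_trans (csInf_le (OrderBot.bddBelow _) ⟨π, hmass, hπ, rfl⟩) hcost

/-- The dynamic-programming value at the pair of roots equals the
nested distance LP value. -/
theorem subtreeDistance_root_eq_NDval
    (T : ℕ) (hT : 1 ≤ T) (X Y : ℕ → Type)
    [∀ n, Fintype (X n)] [∀ n, Nonempty (X n)]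
    [∀ n, Fintype (Y n)] [∀ n, Nonempty (Y n)]
    (p : ∀ t, NDPre X t → X t → ℝ≥0) (q : ∀ t, NDPre Y t → Y t → ℝ≥0)
    (hp : ∀ t, t < T → ∀ k, ∑ x, p t k x = 1)
    (hq : ∀ t, t < T → ∀ l, ∑ y, q t l y = 1)
    (d : NDPath X T → NDPath Y T → ℝ≥0) :
    NDsub T p q d 0 (fun τ => (Nat.not_lt_zero _ τ.2).elim) (fun τ => (Nat.not_lt_zero _ τ.2).elim)
      = NDval T p q d :=
  subtreeDistance_root_eq_NDval_general T X Y p q hp hq d
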